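/- Fix integers K ≥ 1 and 0 = L_0 < L_1 < ⋯ < L_K = I, real data x_1,…,x_I, and 0 ≤ ρ < 1. Define Q : ℝ^K → ℝ by Q(ν_1,…,ν_K) = (1/(1−ρ))·Σ_{k=1}^K Σ_{i=L_{k−1}+1}^{L_k} (x_i−ν_k)² − (ρ/((1+(I−1)ρ)(1−ρ)))·( Σ_{k=1}^K Σ_{i=L_{k−1}+1}^{L_k} (x_i−ν_k) )². Then Q attains its infimum over ℝ^K at ν_k = x̄_k := (1/(L_k−L_{k−1}))·Σ_{i=L_{k−1}+1}^{L_k} x_i for k = 1,…,K. -/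

import Mathlib

/-
Writing `m k` for the mean of group `k`, `n k` for its size and `d k = m k - ν k`, the
decomposition `∑ (x i - ν k)² = ∑ (x i - m k)² + n k (d k)²` within each group shows that
`Q ν - Q m` is the quadratic form `(1 - ρ)⁻¹ ∑ n d² - c (∑ n d)²` in `d`, where
`c = ρ / ((1 + (I - 1) ρ) (1 - ρ))`. The weighted Cauchy–Schwarz inequality
`(∑ n d)² ≤ (∑ n) ∑ n d²` with `∑ n ≤ I` and `c I ≤ (1 - ρ)⁻¹` shows that this form is
positive semidefinite.
-/

open Finset

open scoped BigOperators

/-- The (scaled) negative exponent `Q(ν)` of the joint normal density of the `I = L_K`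
ANOVA cell averages under the equicorrelation-`ρ` fabrication model, with `K` groups of
cells, group `k` consisting of cells `L_{k-1}+1,…,L_k` with common mean `ν_k`. -/
noncomputable def Qform (K : ℕ) (L : Fin (K + 1) → ℕ) (x : ℕ → ℝ) (ρ : ℝ)
    (ν : Fin K → ℝ) : ℝ :=
  (1 / (1 - ρ)) *
      ∑ k : Fin K, ∑ i ∈ Finset.Ioc (L k.castSucc) (L k.succ), (x i - ν k) ^ 2 -
    (ρ / ((1 + ((L (Fin.last K) : ℝ) - 1) * ρ) * (1 - ρ))) *
      (∑ k : Fin K, ∑ i ∈ Finset.Ioc (L k.castSucc) (L k.succ), (x i - ν k)) ^ 2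

theorem Fin.sum_succ_tsub_castSucc_of_monotone {n : ℕ} {f : Fin (n + 1) → ℕ}
    (hf : Monotone f) : ∑ i : Fin n, (f i.succ - f i.castSucc) = f (Fin.last n) - f 0 := by
  induction n with
  | zero => simp
  | succ n ih =>
    have hinit := ih (hf.comp Fin.strictMono_castSucc.monotone)
    simp only [Function.comp_apply, Fin.castSucc_zero] at hinit
    have hle : f 0 ≤ f (Fin.last n).castSucc := hf (Fin.zero_le _)
    have hle' : f (Fin.last n).castSucc ≤ f (Fin.last (n + 1)) := hf (Fin.le_last _)
    rw [Fin.sum_univ_castSucc]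
    simp only [Fin.succ_castSucc, hinit, Fin.succ_last, Nat.succ_eq_add_one]
    omega

section

variable {ι : Type*}

theorem Finset.sq_sum_mul_le_sum_mul_sum_mul_sq {R : Type*} [CommRing R] [LinearOrder R]
    [IsStrictOrderedRing R] (s : Finset ι) {w : ι → R} (hw : ∀ i ∈ s, 0 ≤ w i) (d : ι → R) :
    (∑ i ∈ s, w i * d i) ^ 2 ≤ (∑ i ∈ s, w i) * ∑ i ∈ s, w i * d i ^ 2 :=
  sum_sq_le_sum_mul_sum_of_sq_le_mul s hw (fun i hi => mul_nonneg (hw i hi) (sq_nonneg _))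
    fun i _ => le_of_eq (by ring)

theorem Finset.sum_sub_eq_card_mul_expect_sub (s : Finset ι) (x : ι → ℝ) (c : ℝ) :
    ∑ i ∈ s, (x i - c) = #s * ((𝔼 i ∈ s, x i) - c) := by
  rw [sum_sub_distrib, sum_const, nsmul_eq_mul, mul_sub, card_mul_expect]

theorem Finset.sum_sq_sub_eq_sum_sq_sub_expect_add (s : Finset ι) (x : ι → ℝ) (c : ℝ) :
    ∑ i ∈ s, (x i - c) ^ 2 =
      ∑ i ∈ s, (x i - 𝔼 j ∈ s, x j) ^ 2 + #s * ((𝔼 i ∈ s, x i) - c) ^ 2 := by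
  set m := 𝔼 i ∈ s, x i
  have hcentred : ∑ i ∈ s, (x i - m) = 0 := by
    rw [sum_sub_eq_card_mul_expect_sub, sub_self, mul_zero]
  calc ∑ i ∈ s, (x i - c) ^ 2
      = ∑ i ∈ s, ((x i - m) ^ 2 + 2 * (m - c) * (x i - m) + (m - c) ^ 2) :=
        sum_congr rfl fun i _ => by ring
    _ = ∑ i ∈ s, (x i - m) ^ 2 + #s * (m - c) ^ 2 := by
        rw [sum_add_distrib, sum_add_distrib, ← mul_sum, hcentred, sum_const, nsmul_eq_mul,
          mul_zero, add_zero]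

end

section PooledQuadForm

variable {ι κ : Type*} [Fintype κ]

noncomputable def pooledQuadForm (s : κ → Finset ι) (x : ι → ℝ) (a b : ℝ) (ν : κ → ℝ) : ℝ :=
  a * ∑ k, ∑ i ∈ s k, (x i - ν k) ^ 2 - b * (∑ k, ∑ i ∈ s k, (x i - ν k)) ^ 2

variable (s : κ → Finset ι) (x : ι → ℝ)

theorem pooledQuadForm_eq (a b : ℝ) (ν : κ → ℝ) :
    pooledQuadForm s x a b ν =
      a * ∑ k, ∑ i ∈ s k, (x i - 𝔼 j ∈ s k, x j) ^ 2 +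
        (a * ∑ k, #(s k) * ((𝔼 i ∈ s k, x i) - ν k) ^ 2 -
          b * (∑ k, #(s k) * ((𝔼 i ∈ s k, x i) - ν k)) ^ 2) := by
  rw [pooledQuadForm, sum_congr rfl fun k _ => sum_sq_sub_eq_sum_sq_sub_expect_add (s k) x (ν k),
    sum_congr rfl fun k _ => sum_sub_eq_card_mul_expect_sub (s k) x (ν k), sum_add_distrib]
  ring

theorem pooledQuadForm_expect_le {N : ℝ} (hN : ∑ k, (#(s k) : ℝ) ≤ N) {a b : ℝ} (hb : 0 ≤ b)
    (hbN : b * N ≤ a) (ν : κ → ℝ) :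
    pooledQuadForm s x a b (fun k => 𝔼 i ∈ s k, x i) ≤ pooledQuadForm s x a b ν := by
  set d : κ → ℝ := fun k => (𝔼 i ∈ s k, x i) - ν k
  have hCS := sq_sum_mul_le_sum_mul_sum_mul_sq univ (fun k _ => Nat.cast_nonneg (#(s k))) d
  rw [pooledQuadForm_eq, pooledQuadForm_eq]
  simp only [sub_self, zero_pow two_ne_zero, mul_zero, sum_const_zero, add_zero]
  have hquad : b * (∑ k, #(s k) * d k) ^ 2 ≤ a * ∑ k, #(s k) * d k ^ 2 :=
    calc b * (∑ k, #(s k) * d k) ^ 2 ≤ b * (N * ∑ k, #(s k) * d k ^ 2) := by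
          gcongr; exact hCS.trans (by gcongr)
      _ ≤ a * ∑ k, #(s k) * d k ^ 2 := by rw [← mul_assoc]; gcongr
  linarith

end PooledQuadForm

section Equicorrelation

variable {ρ : ℝ}

theorem one_add_sub_one_mul_pos (hρ0 : 0 ≤ ρ) (hρ1 : ρ < 1) {N : ℝ} (hN : 0 ≤ N) :
    0 < 1 + (N - 1) * ρ := by
  nlinarith

theorem equicorrelation_coeff_nonneg (hρ0 : 0 ≤ ρ) (hρ1 : ρ < 1) {N : ℝ} (hN : 0 ≤ N) :
    0 ≤ ρ / ((1 + (N - 1) * ρ) * (1 - ρ)) := by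
  have hc := one_add_sub_one_mul_pos hρ0 hρ1 hN
  have h1ρ : 0 < 1 - ρ := sub_pos.2 hρ1
  positivity

theorem equicorrelation_coeff_mul_le (hρ0 : 0 ≤ ρ) (hρ1 : ρ < 1) {N : ℝ} (hN : 0 ≤ N) :
    ρ / ((1 + (N - 1) * ρ) * (1 - ρ)) * N ≤ 1 / (1 - ρ) := by
  have hc := one_add_sub_one_mul_pos hρ0 hρ1 hN
  have h1ρ : 0 < 1 - ρ := sub_pos.2 hρ1
  rw [div_mul_eq_mul_div, div_le_div_iff₀ (by positivity) h1ρ]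
  nlinarith

end Equicorrelation

theorem sum_card_Ioc_le_of_monotone {K : ℕ} {L : Fin (K + 1) → ℕ} (hL : Monotone L) :
    ∑ k : Fin K, (#(Ioc (L k.castSucc) (L k.succ)) : ℝ) ≤ L (Fin.last K) := by
  simp only [Nat.card_Ioc]
  norm_cast
  rw [Fin.sum_succ_tsub_castSucc_of_monotone hL]
  exact Nat.sub_le _ _

theorem Q_attains_min_at_group_means_general (K : ℕ) (L : Fin (K + 1) → ℕ)
    (hLmono : StrictMono L) (x : ℕ → ℝ) (ρ : ℝ) (hρ0 : 0 ≤ ρ)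
    (hρ1 : ρ < 1) :
    ∀ ν : Fin K → ℝ,
      Qform K L x ρ (fun k =>
          (∑ i ∈ Finset.Ioc (L k.castSucc) (L k.succ), x i) /
            (L k.succ - L k.castSucc : ℕ)) ≤ Qform K L x ρ ν := by
  intro ν
  have hmean : (fun k : Fin K => (∑ i ∈ Ioc (L k.castSucc) (L k.succ), x i) /
      ((L k.succ - L k.castSucc : ℕ) : ℝ)) = fun k => 𝔼 i ∈ Ioc (L k.castSucc) (L k.succ), x i := by
    ext k
    rw [expect_eq_sum_div_card, Nat.card_Ioc]
  have hI : (0 : ℝ) ≤ L (Fin.last K) := Nat.cast_nonneg _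
  rw [hmean]
  -- `Qform K L x ρ` unfolds to `pooledQuadForm` with `a = 1 / (1 - ρ)` and the equicorrelation `b`.
  exact pooledQuadForm_expect_le _ x (sum_card_Ioc_le_of_monotone hLmono.monotone)
    (equicorrelation_coeff_nonneg hρ0 hρ1 hI) (equicorrelation_coeff_mul_le hρ0 hρ1 hI) ν

/-- `Q` attains its infimum over `ℝ^K` at the vector of group averages `x̄_k`. -/
theorem Q_attains_min_at_group_means (K : ℕ) (hK : 1 ≤ K) (L : Fin (K + 1) → ℕ)
    (hL0 : L 0 = 0) (hLmono : StrictMono L) (x : ℕ → ℝ) (ρ : ℝ) (hρ0 : 0 ≤ ρ)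
    (hρ1 : ρ < 1) :
    ∀ ν : Fin K → ℝ,
      Qform K L x ρ (fun k =>
          (∑ i ∈ Finset.Ioc (L k.castSucc) (L k.succ), x i) /
            (L k.succ - L k.castSucc : ℕ)) ≤ Qform K L x ρ ν :=
  Q_attains_min_at_group_means_general K L hLmono x ρ hρ0 hρ1
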